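/- arXiv:2002.12510 — 2 statements merged into one kernel-verified Lean document; each statement's English description precedes it below -/
import Mathlib

section
/- With P, P', Q and the k-ones 2-valued scoring vector as in the construction from the 3DM instance (described in the context), the distinguished candidate c is a possible winner of the partial profile P ∪ Q under the scoring vector (1, …, 1, 0, …, 0) with k ones (2 ≤ k ≤ m − 2) if and only if the 3DM instance is positive. -/
/-!
A completion of `pᵢ` only inserts `z_{i₃}` and `d₁` into the chain, so every other candidate moves
by at most two places. As `x_{i₁}, y_{i₂}, z_{i₃}, d₁` sit at positions `k-2, …, k+1` of `p'ᵢ`, a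
completion changes the approved set of vote `i` only by choosing which two of these four it
approves, and it approves `y_{i₂}` only if it approves `x_{i₁}`. Measured against `P'`, `c` then
wins iff every `x` and every `y` loses a point, every `z` gains at most one and `d₁` at most `q`.
Counting, the votes in which `x_{i₁}` loses are exactly `q` in number and are also the votes in
which `y_{i₂}` loses and `z_{i₃}` gains, so their triples form a perfect matching. Conversely,
exchanging `x_{i₁} ↔ z_{i₃}` and `y_{i₂} ↔ d₁` in the votes of a perfect matching makes `c` win.
-/

/-- The score of candidate `c` in a profile (a list of votes) under scoring vector `s`.
A vote assigns each candidate a position in `Fin m` (position `0` being most preferred). -/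
def score {C : Type*} {m : ℕ} (s : Fin m → ℕ) (P : List (C ≃ Fin m)) (c : C) : ℕ :=
  (P.map fun T => s (T c)).sum

/-- The `k`-approval scoring vector of length `m`: the top `k` positions get one point. -/
def kApproval (m k : ℕ) : Fin m → ℕ := fun pos => if (pos : ℕ) < k then 1 else 0

/-- Candidates of the 2-valued reduction: the element candidates of `X`, `Y`, `Z` (each of
size `q`) together with the distinguished candidate `c` and the fresh candidates `d₁`, `w`. -/
inductive Cand1 (q : ℕ) where
  | x (i : Fin q)
  | y (i : Fin q)
  | z (i : Fin q)
  | c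
  | d1
  | w

open Finset

section Ranking

variable {C : Type*} {m : ℕ} {p T : C ≃ Fin m} {E : Finset C}

theorem val_le_val_add_card_of_lt_imp_lt [DecidableEq C]
    (h : ∀ u ∉ E, ∀ w ∉ E, p u < p w → T u < T w) {u : C} (hu : u ∉ E) :
    (p u : ℕ) ≤ T u + #E := by
  have hkept : #{b ∈ Iio (p u) | p.symm b ∉ E} ≤ T u :=
    calc #{b ∈ Iio (p u) | p.symm b ∉ E} ≤ #(Iio (T u)) :=
          card_le_card_of_injOn (fun b => T (p.symm b)) (fun b hb => by
            obtain ⟨hb, hbE⟩ := mem_filter.1 (mem_coe.1 hb)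
            exact mem_Iio.2 (by simpa using h _ hbE u hu (by simpa using mem_Iio.1 hb)))
            (T.injective.comp p.symm.injective).injOn
      _ = T u := Fin.card_Iio _
  have hmoved : #{b ∈ Iio (p u) | p.symm b ∈ E} ≤ #E :=
    card_le_card_of_injOn p.symm (fun b hb => mem_coe.2 (mem_filter.1 (mem_coe.1 hb)).2)
      p.symm.injective.injOn
  have := card_filter_add_card_filter_not (s := Iio (p u)) (fun b => p.symm b ∈ E)
  rw [Fin.card_Iio] at this
  omega

theorem lt_imp_lt_symm (h : ∀ u ∉ E, ∀ w ∉ E, p u < p w → T u < T w) :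
    ∀ u ∉ E, ∀ w ∉ E, T u < T w → p u < p w := by
  intro u hu w hw hT
  by_contra hp
  rcases (not_lt.1 hp).lt_or_eq with hlt | heq
  · exact lt_asymm hT (h w hw u hu hlt)
  · obtain rfl := p.injective heq
    exact lt_irrefl _ hT

end Ranking

theorem sum_kApproval_comp {C : Type*} [Fintype C] {m k : ℕ} (v : C ≃ Fin m) (hk : k ≤ m) :
    ∑ u, kApproval m k (v u) = k := by
  rw [Equiv.sum_comp v (kApproval m k)]
  simp [kApproval, Fin.card_filter_val_lt, hk]

def approvers {ι C : Type*} [Fintype ι] {m : ℕ} (k : ℕ) (T : ι → C ≃ Fin m) (f : ι → C) :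
    Finset ι :=
  {i | (T i (f i) : ℕ) < k}

@[simp]
theorem mem_approvers {ι C : Type*} [Fintype ι] {m k : ℕ} {T : ι → C ≃ Fin m} {f : ι → C}
    {i : ι} : i ∈ approvers k T f ↔ (T i (f i) : ℕ) < k := by
  simp [approvers]

theorem score_append {C : Type*} {m : ℕ} (s : Fin m → ℕ) (P Q : List (C ≃ Fin m)) (c : C) :
    score s (P ++ Q) c = score s P c + score s Q c := by
  simp [score]

theorem score_kApproval_ofFn {C : Type*} {m t : ℕ} (k : ℕ) (T : Fin t → C ≃ Fin m) (u : C) :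
    score (kApproval m k) (List.ofFn T) u = #(approvers k T fun _ => u) := by
  simp [score, List.sum_ofFn, kApproval, approvers]

structure Straddles {C : Type*} {m : ℕ} (k : ℕ) (v : C ≃ Fin m) (a b c d : C) : Prop where
  pos_a : (v a : ℕ) + 2 = k
  pos_b : (v b : ℕ) + 1 = k
  pos_c : (v c : ℕ) = k
  pos_d : (v d : ℕ) = k + 1

namespace Straddles

variable {C : Type*} {m k : ℕ} {v T : C ≃ Fin m} {a b c d : C}

theorem lt_or_le_of_ne (hv : Straddles k v a b c d) {u : C} (ha : u ≠ a) (hb : u ≠ b)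
    (hc : u ≠ c) (hd : u ≠ d) : (v u : ℕ) + 2 < k ∨ k + 2 ≤ v u := by
  have := Fin.val_ne_of_ne (v.injective.ne ha)
  have := Fin.val_ne_of_ne (v.injective.ne hb)
  have := Fin.val_ne_of_ne (v.injective.ne hc)
  have := Fin.val_ne_of_ne (v.injective.ne hd)
  have := hv.pos_a; have := hv.pos_b; have := hv.pos_c; have := hv.pos_d
  omega

theorem ne_ab (hv : Straddles k v a b c d) : a ≠ b := by
  rintro rfl; have := hv.pos_a; have := hv.pos_b; omega

theorem ne_ac (hv : Straddles k v a b c d) : a ≠ c := by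
  rintro rfl; have := hv.pos_a; have := hv.pos_c; omega

theorem ne_ad (hv : Straddles k v a b c d) : a ≠ d := by
  rintro rfl; have := hv.pos_a; have := hv.pos_d; omega

theorem ne_bc (hv : Straddles k v a b c d) : b ≠ c := by
  rintro rfl; have := hv.pos_b; have := hv.pos_c; omega

theorem ne_bd (hv : Straddles k v a b c d) : b ≠ d := by
  rintro rfl; have := hv.pos_b; have := hv.pos_d; omega

theorem ne_cd (hv : Straddles k v a b c d) : c ≠ d := by
  rintro rfl; have := hv.pos_c; have := hv.pos_d; omega

theorem val_a_lt (hv : Straddles k v a b c d) : (v a : ℕ) < k := by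
  have := hv.pos_a; omega

theorem val_b_lt (hv : Straddles k v a b c d) : (v b : ℕ) < k := by
  have := hv.pos_b; omega

theorem not_val_c_lt (hv : Straddles k v a b c d) : ¬(v c : ℕ) < k := by
  have := hv.pos_c; omega

theorem not_val_d_lt (hv : Straddles k v a b c d) : ¬(v d : ℕ) < k := by
  have := hv.pos_d; omega

theorem val_a_lt_of_val_b_lt (hv : Straddles k v a b c d)
    (hT : ∀ u w, u ≠ c → u ≠ d → w ≠ c → w ≠ d → v u < v w → T u < T w)
    (hb : (T b : ℕ) < k) : (T a : ℕ) < k := by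
  have hab : v a < v b := by
    have := hv.pos_a; have := hv.pos_b; rw [Fin.lt_def]; omega
  exact lt_trans (Fin.lt_def.1 (hT a b hv.ne_ac hv.ne_ad hv.ne_bc hv.ne_bd hab)) hb

variable [DecidableEq C]

theorem lt_iff_of_completion (hv : Straddles k v a b c d)
    (hT : ∀ u w, u ≠ c → u ≠ d → w ≠ c → w ≠ d → v u < v w → T u < T w) {u : C}
    (ha : u ≠ a) (hb : u ≠ b) (hc : u ≠ c) (hd : u ≠ d) : (T u : ℕ) < k ↔ (v u : ℕ) < k := by
  have hE : ∀ u ∉ ({c, d} : Finset C), ∀ w ∉ ({c, d} : Finset C), v u < v w → T u < T w := by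
    simp only [mem_insert, mem_singleton, not_or]
    exact fun u hu w hw => hT u w hu.1 hu.2 hw.1 hw.2
  have hu : u ∉ ({c, d} : Finset C) := by simp [hc, hd]
  have h₁ := val_le_val_add_card_of_lt_imp_lt hE hu
  have h₂ := val_le_val_add_card_of_lt_imp_lt (lt_imp_lt_symm hE) hu
  have := card_le_two (a := c) (b := d)
  rcases hv.lt_or_le_of_ne ha hb hc hd with h | h <;> omega

/-- A `k`-approval vote approves exactly `k` candidates, and outside `{a, b, c, d}` a completion
approves the same candidates as `v`. -/
theorem balance_of_completion (hv : Straddles k v a b c d)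
    (hT : ∀ u w, u ≠ c → u ≠ d → w ≠ c → w ≠ d → v u < v w → T u < T w) :
    ((if k ≤ (T a : ℕ) then 1 else 0) + if k ≤ (T b : ℕ) then 1 else 0) =
      (if (T c : ℕ) < k then 1 else 0) + if (T d : ℕ) < k then 1 else 0 := by
  have := Fintype.ofEquiv _ v.symm
  have hk : k ≤ m := by have := (v d).isLt; have := hv.pos_d; omega
  set B : Finset C := {a, b, c, d}
  have houtside : ∑ u ∈ Bᶜ, kApproval m k (T u) = ∑ u ∈ Bᶜ, kApproval m k (v u) := by
    refine sum_congr rfl fun u hu => ?_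
    simp only [B, mem_compl, mem_insert, mem_singleton, not_or] at hu
    simp only [kApproval, hv.lt_iff_of_completion hT hu.1 hu.2.1 hu.2.2.1 hu.2.2.2]
  have hT' := sum_add_sum_compl B fun u => kApproval m k (T u)
  have hv' := sum_add_sum_compl B fun u => kApproval m k (v u)
  rw [sum_kApproval_comp _ hk] at hT' hv'
  have hB : ∑ u ∈ B, kApproval m k (T u) = ∑ u ∈ B, kApproval m k (v u) := by omega
  simp only [B, sum_insert, mem_insert, mem_singleton, hv.ne_ab, hv.ne_ac, hv.ne_ad, hv.ne_bc,
    hv.ne_bd, hv.ne_cd, or_self, not_false_eq_true, sum_singleton, kApproval, hv.val_a_lt,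
    hv.val_b_lt, hv.not_val_c_lt, hv.not_val_d_lt, if_true, if_false] at hB
  split_ifs at hB ⊢ <;> omega

theorem indicator_shift (hv : Straddles k v a b c d)
    (hagree : ∀ u, u ≠ a → u ≠ b → u ≠ c → u ≠ d → ((T u : ℕ) < k ↔ (v u : ℕ) < k)) (u : C) :
    ((if (T u : ℕ) < k then 1 else 0) + (if ¬(T a : ℕ) < k ∧ a = u then 1 else 0) +
        if ¬(T b : ℕ) < k ∧ b = u then 1 else 0) =
      (if (v u : ℕ) < k then 1 else 0) + (if (T c : ℕ) < k ∧ c = u then 1 else 0) +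
        if (T d : ℕ) < k ∧ d = u then 1 else 0 := by
  by_cases ha : a = u
  · subst ha
    simp only [hv.ne_ab.symm, hv.ne_ac.symm, hv.ne_ad.symm, hv.val_a_lt, not_lt, and_true,
      and_false, if_true, if_false, add_zero]
    split_ifs <;> omega
  by_cases hb : b = u
  · subst hb
    simp only [hv.ne_bc.symm, hv.ne_bd.symm, ha, hv.val_b_lt, not_lt, and_true, and_false,
      if_true, if_false, add_zero]
    split_ifs <;> omega
  by_cases hc : c = u
  · subst hc
    simp [hv.ne_cd.symm, ha, hb, hv.not_val_c_lt]
  by_cases hd : d = u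
  · subst hd
    simp [ha, hb, hc, hv.not_val_d_lt]
  simp only [ha, hb, hc, hd, and_false, if_false,
    hagree u (Ne.symm ha) (Ne.symm hb) (Ne.symm hc) (Ne.symm hd)]

end Straddles

theorem card_approvers_shift {ι C : Type*} [Fintype ι] [DecidableEq ι] [DecidableEq C] {m k : ℕ}
    {P T : ι → C ≃ Fin m} {a b c d : ι → C}
    (hP : ∀ i, Straddles k (P i) (a i) (b i) (c i) (d i))
    (hagree : ∀ i u, u ≠ a i → u ≠ b i → u ≠ c i → u ≠ d i →
      ((T i u : ℕ) < k ↔ (P i u : ℕ) < k)) (u : C) :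
    #(approvers k T fun _ => u) + #{i ∈ (approvers k T a)ᶜ | a i = u} +
        #{i ∈ (approvers k T b)ᶜ | b i = u} =
      #(approvers k P fun _ => u) + #{i ∈ approvers k T c | c i = u} +
        #{i ∈ approvers k T d | d i = u} := by
  simp only [approvers, compl_filter, filter_filter, card_filter, ← sum_add_distrib]
  exact sum_congr rfl fun i _ => (hP i).indicator_shift (hagree i) u

theorem c_wins_iff {q t k m lam : ℕ} {S : Fin t → Fin q × Fin q × Fin q}
    {P T : Fin t → (Cand1 q ≃ Fin m)} {Q : List (Cand1 q ≃ Fin m)}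
    (hP : ∀ i, Straddles k (P i) (.x (S i).1) (.y (S i).2.1) (.z (S i).2.2) .d1)
    (hagree : ∀ i u, u ≠ .x (S i).1 → u ≠ .y (S i).2.1 → u ≠ .z (S i).2.2 → u ≠ .d1 →
      ((T i u : ℕ) < k ↔ (P i u : ℕ) < k))
    (hlam : score (kApproval m k) (List.ofFn P ++ Q) .c = lam)
    (hX : ∀ j, score (kApproval m k) (List.ofFn P ++ Q) (.x j) = lam + 1)
    (hY : ∀ j, score (kApproval m k) (List.ofFn P ++ Q) (.y j) = lam + 1)
    (hZ : ∀ j, score (kApproval m k) (List.ofFn P ++ Q) (.z j) + 1 = lam)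
    (hD : score (kApproval m k) (List.ofFn P ++ Q) .d1 + q = lam)
    (hW : score (kApproval m k) (List.ofFn P ++ Q) .w < lam) :
    (∀ u, score (kApproval m k) (List.ofFn T ++ Q) u ≤
        score (kApproval m k) (List.ofFn T ++ Q) .c) ↔
      (∀ j, ∃ i ∈ (approvers k T fun i => .x (S i).1)ᶜ, (S i).1 = j) ∧
      (∀ j, ∃ i ∈ (approvers k T fun i => .y (S i).2.1)ᶜ, (S i).2.1 = j) ∧
      (∀ j, #{i ∈ approvers k T fun i => .z (S i).2.2 | (S i).2.2 = j} ≤ 1) ∧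
      #(approvers k T fun _ => .d1) ≤ q := by
  classical
  have shift := card_approvers_shift hP hagree
  simp only [score_append, score_kApproval_ofFn] at hlam hX hY hZ hD hW ⊢
  have hc := shift .c
  have hx := fun j => shift (.x j)
  have hy := fun j => shift (.y j)
  have hz := fun j => shift (.z j)
  have hd := shift .d1
  have hw := shift .w
  simp only [Cand1.x.injEq, Cand1.y.injEq, Cand1.z.injEq, reduceCtorEq, filter_false,
    filter_true, card_empty, add_zero] at hc hx hy hz hd hw
  constructor
  · intro hwin
    refine ⟨fun j => ?_, fun j => ?_, fun j => ?_, ?_⟩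
    · have := hwin (.x j); have := hX j; have := hx j
      exact (card_pos.trans filter_nonempty_iff).1 (by omega)
    · have := hwin (.y j); have := hY j; have := hy j
      exact (card_pos.trans filter_nonempty_iff).1 (by omega)
    · have := hwin (.z j); have := hZ j; have := hz j
      omega
    · have := hwin .d1
      omega
  · rintro ⟨hXlost, hYlost, hZgain, hDgain⟩ (j | j | j | _ | _ | _)
    · have := (card_pos.trans filter_nonempty_iff).2 (hXlost j); have := hX j; have := hx j
      omega
    · have := (card_pos.trans filter_nonempty_iff).2 (hYlost j); have := hY j; have := hy j
      omega
    · have := hZgain j; have := hZ j; have := hz j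
      omega
    all_goals omega

section Matching

variable {ι : Type*} [DecidableEq ι] {q : ℕ} {S : ι → Fin q × Fin q × Fin q}

theorem exists_matching_of_balance [Fintype ι] {Lx Ly Gz Gd : Finset ι} (hxy : Lx ⊆ Ly)
    (hbal : ∀ i, ((if i ∈ Lx then 1 else 0) + if i ∈ Ly then 1 else 0) =
      (if i ∈ Gz then 1 else 0) + if i ∈ Gd then 1 else 0)
    (hx : ∀ j, ∃ i ∈ Lx, (S i).1 = j) (hy : ∀ j, ∃ i ∈ Ly, (S i).2.1 = j)
    (hz : ∀ j, #{i ∈ Gz | (S i).2.2 = j} ≤ 1) (hd : #Gd ≤ q) :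
    ∃ K : Finset ι, #K = q ∧ ∀ i ∈ K, ∀ j ∈ K, i ≠ j →
      (S i).1 ≠ (S j).1 ∧ (S i).2.1 ≠ (S j).2.1 ∧ (S i).2.2 ≠ (S j).2.2 := by
  have hsurj : ∀ {L : Finset ι} {f : ι → Fin q}, (∀ j, ∃ i ∈ L, f i = j) →
      Set.SurjOn f L (univ : Finset (Fin q)) := fun h j _ => by
    obtain ⟨i, hi, rfl⟩ := h j
    exact ⟨i, hi, rfl⟩
  have hLx : q ≤ #Lx := by simpa using card_le_card_of_surjOn _ (hsurj hx)
  have hLy : q ≤ #Ly := by simpa using card_le_card_of_surjOn _ (hsurj hy)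
  have hGz : #Gz ≤ q := by
    rw [card_eq_sum_card_fiberwise (f := fun i => (S i).2.2) (t := univ)
      fun _ _ => mem_coe.2 (mem_univ _)]
    simpa using sum_le_card_nsmul univ _ 1 fun j _ => hz j
  have hcard : #Lx + #Ly = #Gz + #Gd := by
    simpa [sum_add_distrib, sum_boole] using sum_congr rfl fun i (_ : i ∈ univ) => hbal i
  have hLxq : #Lx = q := by omega
  have hLxy : Lx = Ly := eq_of_subset_of_card_le hxy (by omega)
  have hxz : Lx ⊆ Gz := fun i hi => by
    by_contra hi'
    have := hbal i
    simp only [hi, hxy hi, hi', if_true, if_false] at this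
    split_ifs at this <;> omega
  have hinj : ∀ {f : ι → Fin q}, (∀ j, ∃ i ∈ Lx, f i = j) → Set.InjOn f Lx := fun h =>
    injOn_of_surjOn_of_card_le _ (fun _ _ => mem_coe.2 (mem_univ _)) (hsurj h) (by simp [hLxq])
  have hinjx := hinj hx
  have hinjy := hinj (hLxy ▸ hy)
  have hinjz : Set.InjOn (fun i => (S i).2.2) Lx := fun i hi j hj hij =>
    card_le_one.1 (hz (S i).2.2) i (mem_filter.2 ⟨hxz hi, rfl⟩) j (mem_filter.2 ⟨hxz hj, hij.symm⟩)
  exact ⟨Lx, hLxq, fun i hi j hj hne =>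
    ⟨fun h => hne (hinjx hi hj h), fun h => hne (hinjy hi hj h), fun h => hne (hinjz hi hj h)⟩⟩

theorem covers_of_matching {K : Finset ι} (hK : #K = q)
    (hmatch : ∀ i ∈ K, ∀ j ∈ K, i ≠ j →
      (S i).1 ≠ (S j).1 ∧ (S i).2.1 ≠ (S j).2.1 ∧ (S i).2.2 ≠ (S j).2.2) :
    (∀ j, ∃ i ∈ K, (S i).1 = j) ∧ (∀ j, ∃ i ∈ K, (S i).2.1 = j) ∧
      ∀ j, #{i ∈ K | (S i).2.2 = j} ≤ 1 := by
  have hsurj : ∀ {f : ι → Fin q}, (∀ i ∈ K, ∀ j ∈ K, i ≠ j → f i ≠ f j) →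
      ∀ j, ∃ i ∈ K, f i = j := fun h j =>
    surjOn_of_injOn_of_card_le _ (fun _ _ => mem_coe.2 (mem_univ _))
      (fun i hi i' hi' hii' => by_contra fun hne => h i hi i' hi' hne hii') (by simp [hK])
      (mem_coe.2 (mem_univ j))
  refine ⟨hsurj fun i hi j hj hne => (hmatch i hi j hj hne).1,
    hsurj fun i hi j hj hne => (hmatch i hi j hj hne).2.1, fun j => card_le_one.2 ?_⟩
  intro i hi i' hi'
  rw [mem_filter] at hi hi'
  by_contra hne
  exact (hmatch i hi.1 i' hi'.1 hne).2.2 (hi.2.trans hi'.2.symm)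

end Matching

section SwapBlock

variable {C : Type*} [DecidableEq C] {m k : ℕ} {v : C ≃ Fin m} {a b c d : C}

def swapBlock (v : C ≃ Fin m) (a b c d : C) : C ≃ Fin m :=
  (Equiv.swap a c * Equiv.swap b d).trans v

theorem swapBlock_apply_of_ne {u : C} (ha : u ≠ a) (hb : u ≠ b) (hc : u ≠ c) (hd : u ≠ d) :
    swapBlock v a b c d u = v u := by
  simp [swapBlock, Equiv.swap_apply_of_ne_of_ne, ha, hb, hc, hd]

theorem Straddles.swapBlock_apply_a (hv : Straddles k v a b c d) : swapBlock v a b c d a = v c := by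
  simp [swapBlock, Equiv.swap_apply_of_ne_of_ne, hv.ne_ab, hv.ne_ad]

theorem Straddles.swapBlock_apply_b (hv : Straddles k v a b c d) : swapBlock v a b c d b = v d := by
  simp [swapBlock, Equiv.swap_apply_of_ne_of_ne, hv.ne_ad.symm, hv.ne_cd.symm]

theorem Straddles.swapBlock_apply_c (hv : Straddles k v a b c d) : swapBlock v a b c d c = v a := by
  simp [swapBlock, Equiv.swap_apply_of_ne_of_ne, hv.ne_bc.symm, hv.ne_cd]

theorem Straddles.swapBlock_apply_d (hv : Straddles k v a b c d) : swapBlock v a b c d d = v b := by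
  simp [swapBlock, Equiv.swap_apply_of_ne_of_ne, hv.ne_ab.symm, hv.ne_bc]

theorem Straddles.swapBlock_lt_swapBlock (hv : Straddles k v a b c d) {u w : C} (hu : u ≠ c)
    (hu' : u ≠ d) (hw : w ≠ c) (hw' : w ≠ d) (huw : v u < v w) :
    swapBlock v a b c d u < swapBlock v a b c d w := by
  have hpos : ∀ u, u ≠ c → u ≠ d →
      ((swapBlock v a b c d u : ℕ) = v u + 2 ∧ ((v u : ℕ) + 2 = k ∨ (v u : ℕ) + 1 = k)) ∨
        ((swapBlock v a b c d u : ℕ) = v u ∧ ((v u : ℕ) + 2 < k ∨ k + 2 ≤ v u)) := by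
    intro u hc hd
    have := hv.pos_a; have := hv.pos_b; have := hv.pos_c; have := hv.pos_d
    by_cases ha : u = a
    · subst ha; rw [hv.swapBlock_apply_a]; omega
    by_cases hb : u = b
    · subst hb; rw [hv.swapBlock_apply_b]; omega
    exact .inr ⟨by rw [swapBlock_apply_of_ne ha hb hc hd], hv.lt_or_le_of_ne ha hb hc hd⟩
  rw [Fin.lt_def] at huw ⊢
  rcases hpos u hu hu' with h | h <;> rcases hpos w hw hw' with h' | h' <;> omega

end SwapBlock

section SwapBlockOn

variable {ι C : Type*} [DecidableEq ι] [DecidableEq C] {m k : ℕ} (K : Finset ι)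
  {P : ι → C ≃ Fin m} {a b c d : ι → C}

def swapBlockOn (P : ι → C ≃ Fin m) (a b c d : ι → C) (i : ι) : C ≃ Fin m :=
  if i ∈ K then swapBlock (P i) (a i) (b i) (c i) (d i) else P i

theorem swapBlockOn_apply_of_ne {i : ι} {u : C} (ha : u ≠ a i) (hb : u ≠ b i) (hc : u ≠ c i)
    (hd : u ≠ d i) : swapBlockOn K P a b c d i u = P i u := by
  unfold swapBlockOn
  split_ifs
  exacts [swapBlock_apply_of_ne ha hb hc hd, rfl]

theorem swapBlockOn_lt_swapBlockOn (hP : ∀ i, Straddles k (P i) (a i) (b i) (c i) (d i))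
    (i : ι) (u w : C) (hu : u ≠ c i) (hu' : u ≠ d i) (hw : w ≠ c i) (hw' : w ≠ d i)
    (huw : P i u < P i w) : swapBlockOn K P a b c d i u < swapBlockOn K P a b c d i w := by
  unfold swapBlockOn
  split_ifs
  exacts [(hP i).swapBlock_lt_swapBlock hu hu' hw hw' huw, huw]

theorem approvers_swapBlockOn [Fintype ι]
    (hP : ∀ i, Straddles k (P i) (a i) (b i) (c i) (d i)) :
    (approvers k (swapBlockOn K P a b c d) a)ᶜ = K ∧
      (approvers k (swapBlockOn K P a b c d) b)ᶜ = K ∧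
      approvers k (swapBlockOn K P a b c d) c = K ∧
      approvers k (swapBlockOn K P a b c d) d = K := by
  refine ⟨?_, ?_, ?_, ?_⟩ <;> ext i <;> by_cases hi : i ∈ K <;>
    simp [swapBlockOn, hi, (hP i).swapBlock_apply_a, (hP i).swapBlock_apply_b,
      (hP i).swapBlock_apply_c, (hP i).swapBlock_apply_d, (hP i).val_a_lt, (hP i).val_b_lt,
      (hP i).not_val_c_lt, (hP i).not_val_d_lt]

end SwapBlockOn

theorem stmt5_general (q t k : ℕ)
    (S : Fin t → Fin q × Fin q × Fin q)
    (p' : Fin t → (Cand1 q ≃ Fin (3 * q + 3)))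
    (hx : ∀ i, (p' i (Cand1.x (S i).1)).val + 2 = k)
    (hy : ∀ i, (p' i (Cand1.y (S i).2.1)).val + 1 = k)
    (hz : ∀ i, (p' i (Cand1.z (S i).2.2)).val = k)
    (hd : ∀ i, (p' i Cand1.d1).val = k + 1)
    (Q : List (Cand1 q ≃ Fin (3 * q + 3)))
    (lam : ℕ)
    (hlam : score (kApproval (3 * q + 3) k) (List.ofFn p' ++ Q) Cand1.c = lam)
    (hX : ∀ ix : Fin q,
      score (kApproval (3 * q + 3) k) (List.ofFn p' ++ Q) (Cand1.x ix) = lam + 1)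
    (hY : ∀ iy : Fin q,
      score (kApproval (3 * q + 3) k) (List.ofFn p' ++ Q) (Cand1.y iy) = lam + 1)
    (hZ : ∀ iz : Fin q,
      score (kApproval (3 * q + 3) k) (List.ofFn p' ++ Q) (Cand1.z iz) + 1 = lam)
    (hD : score (kApproval (3 * q + 3) k) (List.ofFn p' ++ Q) Cand1.d1 + q = lam)
    (hW : score (kApproval (3 * q + 3) k) (List.ofFn p' ++ Q) Cand1.w < lam) :
    (∃ T : Fin t → (Cand1 q ≃ Fin (3 * q + 3)),
      (∀ (i : Fin t) (u v : Cand1 q),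
        u ≠ Cand1.z (S i).2.2 → u ≠ Cand1.d1 →
        v ≠ Cand1.z (S i).2.2 → v ≠ Cand1.d1 →
        p' i u < p' i v → T i u < T i v) ∧
      ∀ c', score (kApproval (3 * q + 3) k) (List.ofFn T ++ Q) c' ≤
            score (kApproval (3 * q + 3) k) (List.ofFn T ++ Q) Cand1.c) ↔
    (∃ K : Finset (Fin t), K.card = q ∧
      ∀ i ∈ K, ∀ j ∈ K, i ≠ j →
        (S i).1 ≠ (S j).1 ∧ (S i).2.1 ≠ (S j).2.1 ∧ (S i).2.2 ≠ (S j).2.2) := by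
  classical
  have hP : ∀ i, Straddles k (p' i) (.x (S i).1) (.y (S i).2.1) (.z (S i).2.2) .d1 :=
    fun i => ⟨hx i, hy i, hz i, hd i⟩
  constructor
  · rintro ⟨T, hT, hwin⟩
    have hagree := fun i u => (hP i).lt_iff_of_completion (hT i) (u := u)
    obtain ⟨hXlost, hYlost, hZgain, hDgain⟩ := (c_wins_iff hP hagree hlam hX hY hZ hD hW).1 hwin
    refine exists_matching_of_balance (fun i hi => ?_) (fun i => ?_) hXlost hYlost hZgain hDgain
    · simp only [mem_compl, mem_approvers] at hi ⊢
      exact fun hb => hi ((hP i).val_a_lt_of_val_b_lt (hT i) hb)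
    · simpa using (hP i).balance_of_completion (hT i)
  · rintro ⟨K, hKq, hK⟩
    obtain ⟨hXcov, hYcov, hZinj⟩ := covers_of_matching hKq hK
    obtain ⟨hXlost, hYlost, hZgain, hDgain⟩ := approvers_swapBlockOn K hP
    refine ⟨swapBlockOn K p' _ _ _ _, swapBlockOn_lt_swapBlockOn K hP,
      (c_wins_iff hP (fun i u ha hb hc hd => by rw [swapBlockOn_apply_of_ne K ha hb hc hd])
        hlam hX hY hZ hD hW).2 ?_⟩
    rw [hXlost, hYlost, hZgain, hDgain]
    exact ⟨hXcov, hYcov, hZinj, hKq.le⟩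

/-- general 2-valued construction, with scoring vector `(1,…,1,0,…,0)` of
length `m = 3q+3` with `k` ones (`2 ≤ k ≤ m−2`).  In each `p'ᵢ = C⃗¹ᵢ ≻ x_{i₁} ≻ y_{i₂} ≻
z_{i₃} ≻ d₁ ≻ C⃗²ᵢ` the candidate `x_{i₁}` is at (0-indexed) position `k−2`, `y_{i₂}` at
`k−1`, `z_{i₃}` at `k`, `d₁` at `k+1`, and `c` and `w` lie in `C²ᵢ` with `c` preceding `w`;
`pᵢ` is the partial chain obtained by deleting `z_{i₃}` and `d₁`.  With a total profile `Q`
whose scores satisfy the stated conditions relative to `λ = s(P'∪Q, c)`, the candidate `c`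
is a possible winner of `P ∪ Q` iff the 3DM instance is positive. -/
theorem stmt5 (q t k : ℕ) (hq : 1 ≤ q) (hk2 : 2 ≤ k) (hkm : k + 2 ≤ 3 * q + 3)
    (S : Fin t → Fin q × Fin q × Fin q)
    (p' : Fin t → (Cand1 q ≃ Fin (3 * q + 3)))
    (hx : ∀ i, (p' i (Cand1.x (S i).1)).val + 2 = k)
    (hy : ∀ i, (p' i (Cand1.y (S i).2.1)).val + 1 = k)
    (hz : ∀ i, (p' i (Cand1.z (S i).2.2)).val = k)
    (hd : ∀ i, (p' i Cand1.d1).val = k + 1)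
    (hc2 : ∀ i, k + 2 ≤ (p' i Cand1.c).val)
    (hcw : ∀ i, p' i Cand1.c < p' i Cand1.w)
    (Q : List (Cand1 q ≃ Fin (3 * q + 3)))
    (lam : ℕ)
    (hlam : score (kApproval (3 * q + 3) k) (List.ofFn p' ++ Q) Cand1.c = lam)
    (hX : ∀ ix : Fin q,
      score (kApproval (3 * q + 3) k) (List.ofFn p' ++ Q) (Cand1.x ix) = lam + 1)
    (hY : ∀ iy : Fin q,
      score (kApproval (3 * q + 3) k) (List.ofFn p' ++ Q) (Cand1.y iy) = lam + 1)
    (hZ : ∀ iz : Fin q,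
      score (kApproval (3 * q + 3) k) (List.ofFn p' ++ Q) (Cand1.z iz) + 1 = lam)
    (hD : score (kApproval (3 * q + 3) k) (List.ofFn p' ++ Q) Cand1.d1 + q = lam)
    (hW : score (kApproval (3 * q + 3) k) (List.ofFn p' ++ Q) Cand1.w < lam) :
    (∃ T : Fin t → (Cand1 q ≃ Fin (3 * q + 3)),
      (∀ (i : Fin t) (u v : Cand1 q),
        u ≠ Cand1.z (S i).2.2 → u ≠ Cand1.d1 →
        v ≠ Cand1.z (S i).2.2 → v ≠ Cand1.d1 →
        p' i u < p' i v → T i u < T i v) ∧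
      ∀ c', score (kApproval (3 * q + 3) k) (List.ofFn T ++ Q) c' ≤
            score (kApproval (3 * q + 3) k) (List.ofFn T ++ Q) Cand1.c) ↔
    (∃ K : Finset (Fin t), K.card = q ∧
      ∀ i ∈ K, ∀ j ∈ K, i ≠ j →
        (S i).1 ≠ (S j).1 ∧ (S i).2.1 ≠ (S j).2.1 ∧ (S i).2.2 ≠ (S j).2.2) :=
  stmt5_general q t k S p' hx hy hz hd Q lam hlam hX hY hZ hD hW
end

section
/- Let C be a finite candidate set, s a scoring vector of length |C|, c ∈ C, P a partial profile on C in which c is fixed, and Q a total profile on C; let λ := s(P̄ ∪ Q, c), which is the same for every completion P̄ of P, and for c' ≠ c set maxpartial(c') := λ − s(Q, c'). If the pair (P, Q) is tight and P̄ is a completion of P in which c is a winner of P̄ ∪ Q (i.e., s(P̄ ∪ Q, c') ≤ λ for every candidate c'), then s(P̄ ∪ Q, c') = λ for every candidate c' ≠ c; equivalently, every c' ≠ c receives exactly its maximum partial score maxpartial(c') from P̄. -/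
/-!
In every completion of a partial vote, the candidates that are not fixed occupy exactly the
available positions. Hence, over a completion `P̄`, the candidates `c' ≠ c` together collect
`Σ fixed_P(c')` plus the total value of the available positions, and by tightness their scores
in `P̄ ∪ Q` add up to `λ` times their number. As `c` wins with score `λ`, none of them exceeds
`λ`, so each of them scores exactly `λ`.
-/

open scoped Classical

/-- A total order `T` extends (completes) a partial order `p` on the candidates:
whenever `a` is preferred to `b` in `p`, the position of `a` is above that of `b`. -/
def Extends {C : Type*} {m : ℕ} (p : C → C → Prop) (T : C ≃ Fin m) : Prop :=
  ∀ a b, p a b → T a < T b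

/-- Candidate `c'` is fixed at position `pos` in the partial vote `p`:
it occupies position `pos` in every completion of `p`. -/
def FixedAt {C : Type*} {m : ℕ} (p : C → C → Prop) (c' : C) (pos : Fin m) : Prop :=
  ∀ T : C ≃ Fin m, Extends p T → T c' = pos

/-- A position of a partial vote is available if no candidate is fixed at it. -/
def Available {C : Type*} {m : ℕ} (p : C → C → Prop) (pos : Fin m) : Prop :=
  ¬ ∃ c', FixedAt p c' pos

/-- `fixedScore s P c'` is the total score candidate `c'` receives, over the votes of the
partial profile `P` in which it is fixed, from its fixed positions. -/
noncomputable def fixedScore {C : Type*} {m n : ℕ} (s : Fin m → ℕ)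
    (P : Fin n → (C → C → Prop)) (c' : C) : ℕ :=
  ∑ i : Fin n, if h : ∃ pos : Fin m, FixedAt (P i) c' pos then s h.choose else 0

section Completion

variable {C : Type*} {m : ℕ} {p : C → C → Prop} {T : C ≃ Fin m}

theorem not_fixedAt_iff_available (hT : Extends p T) (d : C) :
    (¬ ∃ pos : Fin m, FixedAt p d pos) ↔ Available p (T d) := by
  refine not_congr ⟨fun ⟨pos, hpos⟩ => ⟨d, hpos T hT ▸ hpos⟩, fun ⟨d', hd'⟩ => ?_⟩
  obtain rfl : d' = d := T.injective (hd' T hT)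
  exact ⟨T d', hd'⟩

theorem sum_not_fixedAt_eq_sum_available [Fintype C] {M : Type*} [AddCommMonoid M]
    (hT : Extends p T) (f : Fin m → M) :
    ∑ d ∈ Finset.univ.filter (fun d => ¬ ∃ pos : Fin m, FixedAt p d pos), f (T d) =
      ∑ pos ∈ Finset.univ.filter (fun pos => Available p pos), f pos :=
  Finset.sum_equiv T (fun d => by simpa using not_fixedAt_iff_available hT d) fun _ _ => rfl

end Completion

theorem score_ofFn_append {C : Type*} {m n : ℕ} (s : Fin m → ℕ) (T : Fin n → (C ≃ Fin m))
    (Q : List (C ≃ Fin m)) (d : C) :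
    score s (List.ofFn T ++ Q) d = ∑ i, s (T i d) + score s Q d := by
  simp [score, List.sum_ofFn, Function.comp_def]

section Profile

variable {C : Type*} {m n : ℕ} (s : Fin m → ℕ) {P : Fin n → (C → C → Prop)}
  {T : Fin n → (C ≃ Fin m)}

noncomputable def freeScore (P : Fin n → (C → C → Prop)) (T : Fin n → (C ≃ Fin m))
    (d : C) : ℕ :=
  ∑ i : Fin n, if ∃ pos : Fin m, FixedAt (P i) d pos then 0 else s (T i d)

theorem sum_completion_eq_fixedScore_add_freeScore (hT : ∀ i, Extends (P i) (T i)) (d : C) :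
    ∑ i, s (T i d) = fixedScore s P d + freeScore s P T d := by
  rw [fixedScore, freeScore, ← Finset.sum_add_distrib]
  refine Finset.sum_congr rfl fun i _ => ?_
  by_cases h : ∃ pos : Fin m, FixedAt (P i) d pos
  · rw [dif_pos h, if_pos h, add_zero, h.choose_spec (T i) (hT i)]
  · rw [dif_neg h, if_neg h, zero_add]

/-- Since `c` is fixed in every vote, its free score is `0`, so the sum may run over all
candidates. -/
theorem sum_freeScore_ne_eq_sum_available [Fintype C] [DecidableEq C]
    (hT : ∀ i, Extends (P i) (T i)) {c : C} (hfix : ∀ i, ∃ pos : Fin m, FixedAt (P i) c pos) :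
    ∑ d ∈ Finset.univ.filter (· ≠ c), freeScore s P T d =
      ∑ i, ∑ pos ∈ Finset.univ.filter (fun pos => Available (P i) pos), s pos := by
  rw [Finset.filter_ne', Finset.sum_erase _ (by simp [freeScore, hfix])]
  unfold freeScore
  rw [Finset.sum_comm]
  refine Finset.sum_congr rfl fun i _ => ?_
  rw [← sum_not_fixedAt_eq_sum_available (hT i), Finset.sum_filter]
  exact Finset.sum_congr rfl fun d _ => by split_ifs <;> rfl

theorem sum_score_ne_eq [Fintype C] [DecidableEq C] (hT : ∀ i, Extends (P i) (T i)) {c : C}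
    (hfix : ∀ i, ∃ pos : Fin m, FixedAt (P i) c pos) (Q : List (C ≃ Fin m)) :
    ∑ d ∈ Finset.univ.filter (· ≠ c), score s (List.ofFn T ++ Q) d =
      ∑ d ∈ Finset.univ.filter (· ≠ c), (fixedScore s P d + score s Q d) +
        ∑ i, ∑ pos ∈ Finset.univ.filter (fun pos => Available (P i) pos), s pos := by
  simp only [score_ofFn_append, sum_completion_eq_fixedScore_add_freeScore s hT,
    ← sum_freeScore_ne_eq_sum_available s hT hfix, ← Finset.sum_add_distrib]
  exact Finset.sum_congr rfl fun d _ => by ring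

end Profile

theorem stmt12_general {C : Type*} [Fintype C] [DecidableEq C] {m n : ℕ}
    (s : Fin m → ℕ)
    (c : C)
    (P : Fin n → (C → C → Prop))
    (Q : List (C ≃ Fin m))
    (hfix : ∀ i : Fin n, ∃ pos : Fin m, FixedAt (P i) c pos)
    (lam : ℕ)
    (hlam : ∀ T : Fin n → (C ≃ Fin m), (∀ i, Extends (P i) (T i)) →
      score s (List.ofFn T ++ Q) c = lam)
    (htight :
      (∑ i : Fin n,
        ∑ pos ∈ Finset.univ.filter (fun pos : Fin m => Available (P i) pos), (s pos : ℤ)) =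
      ∑ c' ∈ Finset.univ.filter (fun c' : C => c' ≠ c),
        (((lam : ℤ) - score s Q c') - fixedScore s P c'))
    (T : Fin n → (C ≃ Fin m)) (hT : ∀ i, Extends (P i) (T i))
    (hwin : ∀ c', score s (List.ofFn T ++ Q) c' ≤ score s (List.ofFn T ++ Q) c) :
    ∀ c', c' ≠ c → score s (List.ofFn T ++ Q) c' = lam := by
  intro c' hc'
  have hsum : ∑ d ∈ Finset.univ.filter (· ≠ c), (score s (List.ofFn T ++ Q) d : ℤ) =
      ∑ d ∈ Finset.univ.filter (· ≠ c), (lam : ℤ) := by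
    have := congrArg (Nat.cast : ℕ → ℤ) (sum_score_ne_eq s hT hfix Q)
    push_cast at this
    rw [this, htight, ← Finset.sum_add_distrib]
    exact Finset.sum_congr rfl fun d _ => by ring
  have hle : ∀ d ∈ Finset.univ.filter (· ≠ c), (score s (List.ofFn T ++ Q) d : ℤ) ≤ lam :=
    fun d _ => by exact_mod_cast hlam T hT ▸ hwin d
  exact_mod_cast (Finset.sum_eq_sum_iff_of_le hle).mp hsum c' (by simpa using hc')

/-- let `P` be a partial profile in which the distinguished candidate `c` is
fixed, `Q` a total profile, and `λ` the (completion-independent) score of `c` in any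
`P̄ ∪ Q`.  If the pair `(P, Q)` is tight — the sum over the votes of `P` of the score
values of the available positions equals `Σ_{c' ≠ c} (maxpartial(c') − fixed_P(c'))`,
where `maxpartial(c') = λ − s(Q, c')` — and `P̄` is a completion of `P` in which `c` is a
winner of `P̄ ∪ Q`, then `s(P̄ ∪ Q, c') = λ` for every candidate `c' ≠ c`. -/
theorem stmt12 {C : Type*} [Fintype C] [DecidableEq C] {m n : ℕ}
    (s : Fin m → ℕ) (hanti : Antitone s)
    (c : C)
    (P : Fin n → (C → C → Prop))
    (hpo : ∀ i, Irreflexive (P i) ∧ Transitive (P i))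
    (Q : List (C ≃ Fin m))
    (hfix : ∀ i : Fin n, ∃ pos : Fin m, FixedAt (P i) c pos)
    (lam : ℕ)
    (hlam : ∀ T : Fin n → (C ≃ Fin m), (∀ i, Extends (P i) (T i)) →
      score s (List.ofFn T ++ Q) c = lam)
    (htight :
      (∑ i : Fin n,
        ∑ pos ∈ Finset.univ.filter (fun pos : Fin m => Available (P i) pos), (s pos : ℤ)) =
      ∑ c' ∈ Finset.univ.filter (fun c' : C => c' ≠ c),
        (((lam : ℤ) - score s Q c') - fixedScore s P c'))
    (T : Fin n → (C ≃ Fin m)) (hT : ∀ i, Extends (P i) (T i))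
    (hwin : ∀ c', score s (List.ofFn T ++ Q) c' ≤ score s (List.ofFn T ++ Q) c) :
    ∀ c', c' ≠ c → score s (List.ofFn T ++ Q) c' = lam :=
  stmt12_general s c P Q hfix lam hlam htight T hT hwin
end
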